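/- arXiv:1305.1749 — 4 statements merged into one kernel-verified Lean document; each statement's English description precedes it below -/
import Mathlib

section
/- Let U = !![l₁,l₂;r₁,r₂] be a 2×2 complex unitary matrix, L = !![l₁,l₂;0,0], R = !![0,0;r₁,r₂]. Then the map W on ℓ²(ℤ, ℂ²) defined by (Wψ)(x) = L·ψ(x+1) + R·ψ(x−1) is a well-defined unitary operator: it is a surjective linear isometry of ℓ²(ℤ, ℂ²) onto itself. -/
/-!
The walk factors as `W = S ∘ Û`: first the coin `U` acts on `ψ(x)` at every site, then the
conditional shift `S` moves the first component of every site one step left and the second one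
step right. `Û` is unitary because `U` is, and `S` is unitary because it merely translates each
component separately, which preserves each component's `ℓ²`-norm.
-/

open Matrix Complex

noncomputable section

open scoped ENNReal

section LpCongrRight

variable {α 𝕜 : Type*} {E F : α → Type*} [NormedField 𝕜] [∀ i, NormedAddCommGroup (E i)]
  [∀ i, NormedAddCommGroup (F i)] [∀ i, NormedSpace 𝕜 (E i)] [∀ i, NormedSpace 𝕜 (F i)]
  {p : ℝ≥0∞} [Fact (1 ≤ p)]

def LinearIsometryEquiv.lpCongrRight (e : ∀ i, E i ≃ₗᵢ[𝕜] F i) : lp E p ≃ₗᵢ[𝕜] lp F p where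
  toFun f := ⟨fun i => e i (f i), (lp.memℓp f).mono' fun i => ((e i).norm_map _).le⟩
  invFun g := ⟨fun i => (e i).symm (g i), (lp.memℓp g).mono' fun i => ((e i).symm.norm_map _).le⟩
  map_add' f g := by ext i; exact map_add (e i) (f i) (g i)
  map_smul' c f := by ext i; exact (e i).map_smul c (f i)
  left_inv f := by ext; simp
  right_inv g := by ext; simp
  norm_map' f := by
    have hp : p ≠ 0 := (zero_lt_one.trans_le Fact.out).ne'
    exact le_antisymm (lp.norm_mono hp fun i => ((e i).norm_map _).le)
      (lp.norm_mono hp fun i => ((e i).norm_map _).ge)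

@[simp]
theorem LinearIsometryEquiv.lpCongrRight_apply (e : ∀ i, E i ≃ₗᵢ[𝕜] F i) (f : lp E p) (i : α) :
    LinearIsometryEquiv.lpCongrRight e f i = e i (f i) := rfl

end LpCongrRight

section LpTwo

variable {α : Type*} {E : α → Type*} [∀ i, NormedAddCommGroup (E i)]

theorem memℓp_two_iff {f : ∀ i, E i} : Memℓp f 2 ↔ Summable fun i => ‖f i‖ ^ 2 := by
  simpa using memℓp_gen_iff (p := 2) (f := f) (by norm_num)

theorem lp.hasSum_norm_sq (f : lp E 2) : HasSum (fun i => ‖f i‖ ^ 2) (‖f‖ ^ 2) := by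
  simpa using lp.hasSum_norm (p := 2) (by norm_num) f

end LpTwo

section ShiftComponents

variable {G ι 𝕜 : Type*} {β : ι → Type*} [AddGroup G] [Fintype ι] [NormedField 𝕜]
  [∀ k, NormedAddCommGroup (β k)] [∀ k, NormedSpace 𝕜 (β k)]

theorem lp.hasSum_norm_sq_shiftComponents (s : ι → G) (φ : lp (fun _ : G => PiLp 2 β) 2) :
    HasSum (fun x => ‖(WithLp.toLp 2 fun k => φ (x + s k) k : PiLp 2 β)‖ ^ 2) (‖φ‖ ^ 2) := by
  have summable_component : ∀ k, Summable fun x => ‖φ x k‖ ^ 2 := fun k =>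
    (lp.hasSum_norm_sq φ).summable.of_nonneg_of_le (fun _ => by positivity)
      fun x => by gcongr; exact PiLp.norm_apply_le _ _
  have norm_sq_eq : ‖φ‖ ^ 2 = ∑ k, ∑' x, ‖φ x k‖ ^ 2 :=
    (lp.hasSum_norm_sq φ).unique <| by
      simpa only [PiLp.norm_sq_eq_of_L2] using
        hasSum_sum fun k _ => (summable_component k).hasSum
  rw [norm_sq_eq]
  simp only [PiLp.norm_sq_eq_of_L2]
  exact hasSum_sum fun k _ =>
    ((Equiv.addRight (s k)).hasSum_iff (f := fun x => ‖φ x k‖ ^ 2)).2 (summable_component k).hasSum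

def lp.shiftComponents (s : ι → G) :
    lp (fun _ : G => PiLp 2 β) 2 ≃ₗᵢ[𝕜] lp (fun _ : G => PiLp 2 β) 2 where
  toFun φ := ⟨fun x => WithLp.toLp 2 fun k => φ (x + s k) k,
    memℓp_two_iff.2 (lp.hasSum_norm_sq_shiftComponents s φ).summable⟩
  invFun φ := ⟨fun x => WithLp.toLp 2 fun k => φ (x + -s k) k,
    memℓp_two_iff.2 (lp.hasSum_norm_sq_shiftComponents (-s) φ).summable⟩
  map_add' _ _ := rfl
  map_smul' _ _ := rfl
  left_inv φ := by ext x k; simp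
  right_inv φ := by ext x k; simp
  norm_map' φ := (pow_left_inj₀ (norm_nonneg _) (norm_nonneg _) two_ne_zero).1 <|
    (lp.hasSum_norm_sq _).unique (lp.hasSum_norm_sq_shiftComponents s φ)

@[simp]
theorem lp.shiftComponents_apply (s : ι → G) (φ : lp (fun _ : G => PiLp 2 β) 2) (x : G) (k : ι) :
    lp.shiftComponents (𝕜 := 𝕜) s φ x k = φ (x + s k) k := rfl

end ShiftComponents

section UnitaryMatrix

variable {n 𝕜 : Type*} [Fintype n] [DecidableEq n] [RCLike 𝕜]

def Matrix.unitaryGroup.toLinearIsometryEquiv (U : unitaryGroup n 𝕜) :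
    EuclideanSpace 𝕜 n ≃ₗᵢ[𝕜] EuclideanSpace 𝕜 n :=
  Unitary.linearIsometryEquiv
    ⟨toEuclideanCLM (n := n) (𝕜 := 𝕜) U, Unitary.map_mem (toEuclideanCLM (n := n) (𝕜 := 𝕜)) U.2⟩

@[simp]
theorem Matrix.unitaryGroup.toLinearIsometryEquiv_apply (U : unitaryGroup n 𝕜)
    (v : EuclideanSpace 𝕜 n) :
    Matrix.unitaryGroup.toLinearIsometryEquiv U v = WithLp.toLp 2 ((U : Matrix n n 𝕜) *ᵥ v.ofLp) :=
  rfl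

end UnitaryMatrix

/-- The quantum walk one-step map is a unitary (surjective linear isometry) on `ℓ²(ℤ, ℂ²)`. -/
theorem quantum_walk_step_unitary
    (l₁ l₂ r₁ r₂ : ℂ)
    (hU : !![l₁, l₂; r₁, r₂] ∈ Matrix.unitaryGroup (Fin 2) ℂ) :
    ∃ W : (lp (fun _ : ℤ => EuclideanSpace ℂ (Fin 2)) 2) ≃ₗᵢ[ℂ]
          (lp (fun _ : ℤ => EuclideanSpace ℂ (Fin 2)) 2),
      ∀ (ψ : lp (fun _ : ℤ => EuclideanSpace ℂ (Fin 2)) 2) (x : ℤ) (i : Fin 2),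
        (W ψ : ∀ x : ℤ, EuclideanSpace ℂ (Fin 2)) x i =
          Matrix.mulVec !![l₁, l₂; 0, 0] (fun j => (ψ : ∀ x : ℤ, EuclideanSpace ℂ (Fin 2)) (x + 1) j) i
          + Matrix.mulVec !![0, 0; r₁, r₂] (fun j => (ψ : ∀ x : ℤ, EuclideanSpace ℂ (Fin 2)) (x - 1) j) i := by
  let coin := Matrix.unitaryGroup.toLinearIsometryEquiv ⟨_, hU⟩
  refine ⟨(LinearIsometryEquiv.lpCongrRight fun _ => coin).trans (lp.shiftComponents ![1, -1]),
    fun ψ x i => ?_⟩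
  fin_cases i <;> simp [coin, mulVec, dotProduct, Fin.sum_univ_two, sub_eq_add_neg]
end
end

section
/- Let U = !![l₁,l₂;r₁,r₂] be a 2×2 complex unitary matrix with det U = 1, and let θ₁ ∈ ℝ satisfy l₁ = |l₁|e^{iθ₁}. Then for every k ∈ ℝ and every λ ∈ ℂ, det(λ·1 − U(k)) = λ² − 2|l₁|·cos(k−θ₁)·λ + 1, where U(k) := !![e^{−ik}l₁, e^{−ik}l₂; e^{ik}r₁, e^{ik}r₂]. In particular det U(k) = 1 and trace U(k) = 2|l₁|cos(k−θ₁), and the eigenvalues of U(k) are e^{iγ(k−θ₁)} and e^{−iγ(k−θ₁)} where γ(k) := Real.arccos(|l₁|·cos k). -/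
/-! For a special unitary matrix the adjoint is the adjugate, so `r₂ = conj l₁`. Hence `U(k)` has
determinant `det U = 1` and trace `2 Re (e^{-ik} l₁) = 2 |l₁| cos (k - θ₁)`, and its characteristic
polynomial is `λ² - 2 cos γ λ + 1 = (λ - e^{iγ}) (λ - e^{-iγ})` with `γ = γ(k - θ₁)`: `arccos`
inverts `cos` here because the entries of a unitary matrix have norm at most `1`. -/

open Matrix Complex

noncomputable section

/-- `γ(k) = arccos(|l₁| cos k)`. -/
def gam (l₁ : ℂ) (k : ℝ) : ℝ := Real.arccos (‖l₁‖ * Real.cos k)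

/-- `U(k) = !![e^{−ik}l₁, e^{−ik}l₂; e^{ik}r₁, e^{ik}r₂]`. -/
def Uk (l₁ l₂ r₁ r₂ : ℂ) (k : ℝ) : Matrix (Fin 2) (Fin 2) ℂ :=
  !![Complex.exp (-Complex.I * k) * l₁, Complex.exp (-Complex.I * k) * l₂;
     Complex.exp (Complex.I * k) * r₁, Complex.exp (Complex.I * k) * r₂]

open ComplexConjugate

theorem Matrix.star_eq_adjugate_of_mem_unitaryGroup {n α : Type*} [Fintype n] [DecidableEq n]
    [CommRing α] [StarRing α] {U : Matrix n n α} (hU : U ∈ unitaryGroup n α) (hdet : U.det = 1) :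
    star U = U.adjugate := by
  rw [← inv_eq_left_inv (mem_unitaryGroup_iff'.mp hU), inv_def, hdet, Ring.inverse_one, one_smul]

theorem conj_eq_of_mem_unitaryGroup_of_det_eq_one {a b c d : ℂ}
    (hU : !![a, b; c, d] ∈ unitaryGroup (Fin 2) ℂ) (hdet : (!![a, b; c, d]).det = 1) :
    d = conj a := by
  have h := congrFun (congrFun (star_eq_adjugate_of_mem_unitaryGroup hU hdet) 0) 0
  simpa [adjugate_fin_two_of, star_apply] using h.symm

theorem Matrix.det_smul_one_sub_fin_two {R : Type*} [CommRing R] (A : Matrix (Fin 2) (Fin 2) R)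
    (l : R) : (l • (1 : Matrix (Fin 2) (Fin 2) R) - A).det = l ^ 2 - A.trace * l + A.det := by
  simp only [det_fin_two, trace_fin_two, sub_apply, smul_apply, smul_eq_mul, one_apply_eq,
    one_apply_ne zero_ne_one, one_apply_ne one_ne_zero]
  ring

theorem Complex.exp_I_mul_sq_sub_two_cos_mul_add_one (z : ℂ) :
    exp (I * z) ^ 2 - 2 * cos z * exp (I * z) + 1 = 0 := by
  have h : exp (z * I) * exp (-z * I) = 1 := by rw [← exp_add]; ring_nf; exact exp_zero
  rw [two_cos, mul_comm I z]
  linear_combination -h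

theorem Uk_det (l₁ l₂ r₁ r₂ : ℂ) (k : ℝ) :
    (Uk l₁ l₂ r₁ r₂ k).det = (!![l₁, l₂; r₁, r₂]).det := by
  have h : exp (-I * k) * exp (I * k) = 1 := by rw [← exp_add]; ring_nf; exact exp_zero
  rw [Uk, det_fin_two_of, det_fin_two_of]
  linear_combination (l₁ * r₂ - l₂ * r₁) * h

theorem Uk_trace_of_polar {l₁ : ℂ} (l₂ r₁ : ℂ) {θ₁ : ℝ}
    (hθ₁ : l₁ = (‖l₁‖ : ℂ) * exp (I * θ₁)) (k : ℝ) :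
    (Uk l₁ l₂ r₁ (conj l₁) k).trace = 2 * ((‖l₁‖ * Real.cos (k - θ₁) : ℝ) : ℂ) := by
  have hconj : conj l₁ = (‖l₁‖ : ℂ) * exp (-I * θ₁) := by
    conv_lhs => rw [hθ₁]
    rw [map_mul, conj_ofReal, ← exp_conj, map_mul, conj_I, conj_ofReal]
  have e₁ : exp (-I * k) * exp (I * θ₁) = exp (-((k - θ₁ : ℝ) : ℂ) * I) := by
    rw [← exp_add]; push_cast; ring_nf
  have e₂ : exp (I * k) * exp (-I * θ₁) = exp (((k - θ₁ : ℝ) : ℂ) * I) := by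
    rw [← exp_add]; push_cast; ring_nf
  rw [Uk, trace_fin_two_of, ofReal_mul, ofReal_cos, hconj]
  nth_rw 1 [hθ₁]
  linear_combination (‖l₁‖ : ℂ) * (e₁ + e₂ - two_cos ((k - θ₁ : ℝ) : ℂ))

theorem cos_gam {l₁ : ℂ} (hl₁ : ‖l₁‖ ≤ 1) (x : ℝ) :
    Real.cos (gam l₁ x) = ‖l₁‖ * Real.cos x := by
  have h : |‖l₁‖ * Real.cos x| ≤ 1 := by
    rw [abs_mul, abs_norm]
    exact mul_le_one₀ hl₁ (abs_nonneg _) (Real.abs_cos_le_one x)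
  exact Real.cos_arccos (abs_le.mp h).1 (abs_le.mp h).2

theorem characteristic_equation_of_Uk
    (l₁ l₂ r₁ r₂ : ℂ)
    (hU : !![l₁, l₂; r₁, r₂] ∈ Matrix.unitaryGroup (Fin 2) ℂ)
    (hdet : (!![l₁, l₂; r₁, r₂] : Matrix (Fin 2) (Fin 2) ℂ).det = 1)
    (θ₁ : ℝ) (hθ₁ : l₁ = (‖l₁‖ : ℂ) * Complex.exp (Complex.I * θ₁))
    (k : ℝ) :
    (∀ l : ℂ, (l • (1 : Matrix (Fin 2) (Fin 2) ℂ) - Uk l₁ l₂ r₁ r₂ k).det =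
        l ^ 2 - 2 * ((‖l₁‖ * Real.cos (k - θ₁) : ℝ) : ℂ) * l + 1)
    ∧ (Uk l₁ l₂ r₁ r₂ k).det = 1
    ∧ (Uk l₁ l₂ r₁ r₂ k).trace = 2 * ((‖l₁‖ * Real.cos (k - θ₁) : ℝ) : ℂ)
    ∧ (Complex.exp (Complex.I * gam l₁ (k - θ₁)) • (1 : Matrix (Fin 2) (Fin 2) ℂ)
        - Uk l₁ l₂ r₁ r₂ k).det = 0
    ∧ (Complex.exp (-Complex.I * gam l₁ (k - θ₁)) • (1 : Matrix (Fin 2) (Fin 2) ℂ)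
        - Uk l₁ l₂ r₁ r₂ k).det = 0 := by
  obtain rfl := conj_eq_of_mem_unitaryGroup_of_det_eq_one hU hdet
  have htr := Uk_trace_of_polar l₂ r₁ hθ₁ k
  have hdetk : (Uk l₁ l₂ r₁ (conj l₁) k).det = 1 := (Uk_det _ _ _ _ k).trans hdet
  have hchar : ∀ l : ℂ, (l • (1 : Matrix (Fin 2) (Fin 2) ℂ) - Uk l₁ l₂ r₁ (conj l₁) k).det =
      l ^ 2 - 2 * ((‖l₁‖ * Real.cos (k - θ₁) : ℝ) : ℂ) * l + 1 := fun l => by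
    rw [det_smul_one_sub_fin_two, htr, hdetk]
  have hl₁ : ‖l₁‖ ≤ 1 := by simpa using entry_norm_bound_of_unitary hU 0 0
  have hcos := cos_gam hl₁ (k - θ₁)
  refine ⟨hchar, hdetk, htr, ?_, ?_⟩
  · rw [hchar, ← hcos, ofReal_cos]
    exact exp_I_mul_sq_sub_two_cos_mul_add_one _
  · rw [hchar, ← hcos, ofReal_cos, ← cos_neg, neg_mul, ← mul_neg]
    exact exp_I_mul_sq_sub_two_cos_mul_add_one _
end
end

section
/- Let U = !![l₁,l₂;r₁,r₂] be a 2×2 complex unitary matrix with det U = 1 and l₂ ≠ 0. Then for every k ∈ ℝ the matrix S(k) is unitary, and U(k) = S(k−θ₁) · diag(e^{iγ(k−θ₁)}, e^{−iγ(k−θ₁)}) · S(k−θ₁)*, where U(k) := !![e^{−ik}l₁, e^{−ik}l₂; e^{ik}r₁, e^{ik}r₂] and S(k)* is the conjugate transpose. -/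
/-!
Unitarity with `det U = 1` forces `r₁ = -l̄₂` and `r₂ = l̄₁`. Writing `a = |l₁|`, `b = |l₂|`,
`t = k - θ₁` and `ω = e^{i(k - θ₂)}`, the matrix `U(k)` becomes
`!![a e^{-it}, b ω̄; -b ω, a e^{it}]`.
For `s = (a/b) sin t` and either root `x = s ± √(1 + s²)` of `(x - s)² = 1 + s²`, the vector
`(1, iωx)` is an eigenvector with eigenvalue `a cos t ± i b √(1 + s²)`, which equals `e^{±iγ(t)}`
because `a² + b² = 1`. The two roots multiply to `-1`, which is exactly the orthogonality of the
two eigenvectors; so `S` is unitary and `U(k) S = S D` gives `U(k) = S D S*`.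
-/

open Matrix Complex Filter Topology

noncomputable section

/-- `α₊(k) = i e^{i(k+θ₁−θ₂)}((|l₁|/|l₂|) sin k + √(1+((|l₁|/|l₂|) sin k)²))`. -/
def alphaP (l₁ l₂ : ℂ) (θ₁ θ₂ : ℝ) (k : ℝ) : ℂ :=
  Complex.I * Complex.exp (Complex.I * (k + θ₁ - θ₂)) *
    (((‖l₁‖ / ‖l₂‖ * Real.sin k
      + Real.sqrt (1 + (‖l₁‖ / ‖l₂‖ * Real.sin k) ^ 2) : ℝ)) : ℂ)

/-- `α₋(k) = i e^{i(k+θ₁−θ₂)}((|l₁|/|l₂|) sin k − √(1+((|l₁|/|l₂|) sin k)²))`. -/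
def alphaM (l₁ l₂ : ℂ) (θ₁ θ₂ : ℝ) (k : ℝ) : ℂ :=
  Complex.I * Complex.exp (Complex.I * (k + θ₁ - θ₂)) *
    (((‖l₁‖ / ‖l₂‖ * Real.sin k
      - Real.sqrt (1 + (‖l₁‖ / ‖l₂‖ * Real.sin k) ^ 2) : ℝ)) : ℂ)

/-- The unitary `S(k)` with columns `(1,α₊(k))/√(1+|α₊(k)|²)` and `(1,α₋(k))/√(1+|α₋(k)|²)`. -/
def SU (l₁ l₂ : ℂ) (θ₁ θ₂ : ℝ) (k : ℝ) : Matrix (Fin 2) (Fin 2) ℂ :=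
  !![1 / ((Real.sqrt (1 + ‖alphaP l₁ l₂ θ₁ θ₂ k‖ ^ 2) : ℝ) : ℂ),
     1 / ((Real.sqrt (1 + ‖alphaM l₁ l₂ θ₁ θ₂ k‖ ^ 2) : ℝ) : ℂ);
     alphaP l₁ l₂ θ₁ θ₂ k / ((Real.sqrt (1 + ‖alphaP l₁ l₂ θ₁ θ₂ k‖ ^ 2) : ℝ) : ℂ),
     alphaM l₁ l₂ θ₁ θ₂ k / ((Real.sqrt (1 + ‖alphaM l₁ l₂ θ₁ θ₂ k‖ ^ 2) : ℝ) : ℂ)]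

/-- `H(k) = S(k−θ₁) diag(γ(k−θ₁), −γ(k−θ₁)) S(k−θ₁)*`. -/
def Hk (l₁ l₂ : ℂ) (θ₁ θ₂ : ℝ) (k : ℝ) : Matrix (Fin 2) (Fin 2) ℂ :=
  SU l₁ l₂ θ₁ θ₂ (k - θ₁) *
    Matrix.diagonal ![((gam l₁ (k - θ₁) : ℝ) : ℂ), -((gam l₁ (k - θ₁) : ℝ) : ℂ)] *
    (SU l₁ l₂ θ₁ θ₂ (k - θ₁))ᴴ

open ComplexConjugate

namespace Matrix

theorem eq_mul_mul_conjTranspose_of_mul_eq_mul {n R : Type*} [Fintype n] [DecidableEq n]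
    [CommRing R] [StarRing R] {A S D : Matrix n n R} (hS : S ∈ unitaryGroup n R)
    (h : A * S = S * D) : A = S * D * Sᴴ :=
  calc A = A * (S * Sᴴ) := by rw [← star_eq_conjTranspose, mem_unitaryGroup_iff.mp hS, mul_one]
    _ = S * D * Sᴴ := by rw [← mul_assoc, h]

theorem of_mem_specialUnitaryGroup_fin_two {R : Type*} [CommRing R] [StarRing R] {a b c d : R}
    (hA : !![a, b; c, d] ∈ specialUnitaryGroup (Fin 2) R) :
    a * star a + b * star b = 1 ∧ c = -star b ∧ d = star a := by
  obtain ⟨hU, hdet⟩ := mem_specialUnitaryGroup_iff.mp hA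
  have h := mem_unitaryGroup_iff.mp hU
  have h00 : a * star a + b * star b = 1 := by
    simpa [mul_apply, Fin.sum_univ_two] using congrFun (congrFun h 0) 0
  have h10 : c * star a + d * star b = 0 := by
    simpa [mul_apply, Fin.sum_univ_two] using congrFun (congrFun h 1) 0
  rw [det_fin_two_of] at hdet
  exact ⟨h00, by linear_combination -c * h00 - star b * hdet + a * h10,
    by linear_combination -d * h00 + star a * hdet + b * h10⟩

end Matrix

def normalizedColumns (α β : ℂ) : Matrix (Fin 2) (Fin 2) ℂ :=
  !![1 / ((√(1 + ‖α‖ ^ 2) : ℝ) : ℂ), 1 / ((√(1 + ‖β‖ ^ 2) : ℝ) : ℂ);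
     α / ((√(1 + ‖α‖ ^ 2) : ℝ) : ℂ), β / ((√(1 + ‖β‖ ^ 2) : ℝ) : ℂ)]

theorem sq_ofReal_sqrt_one_add_norm_sq (α : ℂ) :
    ((√(1 + ‖α‖ ^ 2) : ℝ) : ℂ) ^ 2 = 1 + conj α * α := by
  rw [← ofReal_pow, Real.sq_sqrt (by positivity), mul_comm, mul_conj']; push_cast; ring

theorem ofReal_sqrt_one_add_norm_sq_ne_zero (α : ℂ) : ((√(1 + ‖α‖ ^ 2) : ℝ) : ℂ) ≠ 0 :=
  ofReal_ne_zero.mpr (by positivity)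

theorem normalizedColumns_mem_unitaryGroup {α β : ℂ} (h : conj α * β = -1) :
    normalizedColumns α β ∈ unitaryGroup (Fin 2) ℂ := by
  rw [mem_unitaryGroup_iff']
  have hα := sq_ofReal_sqrt_one_add_norm_sq α
  have hβ := sq_ofReal_sqrt_one_add_norm_sq β
  have hα0 := ofReal_sqrt_one_add_norm_sq_ne_zero α
  have hβ0 := ofReal_sqrt_one_add_norm_sq_ne_zero β
  have h' : conj β * α = -1 := by rw [mul_comm, ← conj_conj α, ← map_mul, h]; simp
  ext i j
  fin_cases i <;> fin_cases j <;>
    simp only [normalizedColumns, mul_apply, star_apply, of_apply, cons_val', cons_val_zero,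
      cons_val_one, cons_val_fin_one, Fin.sum_univ_two, Fin.isValue, Fin.zero_eta, Fin.mk_one,
      RCLike.star_def, one_div, map_inv₀, map_div₀, conj_ofReal, one_apply_eq, one_apply_ne, ne_eq,
      zero_ne_one, one_ne_zero, not_false_eq_true]
  · field_simp; linear_combination -hα
  · field_simp; linear_combination h
  · field_simp; linear_combination h'
  · field_simp; linear_combination -hβ

theorem mul_normalizedColumns {M : Matrix (Fin 2) (Fin 2) ℂ} {α β μ ν : ℂ}
    (hα : M *ᵥ ![1, α] = μ • ![1, α]) (hβ : M *ᵥ ![1, β] = ν • ![1, β]) :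
    M * normalizedColumns α β = normalizedColumns α β * diagonal ![μ, ν] := by
  have hα0 : M 0 0 + M 0 1 * α = μ := by simpa [mulVec, dotProduct] using congrFun hα 0
  have hα1 : M 1 0 + M 1 1 * α = μ * α := by simpa [mulVec, dotProduct] using congrFun hα 1
  have hβ0 : M 0 0 + M 0 1 * β = ν := by simpa [mulVec, dotProduct] using congrFun hβ 0
  have hβ1 : M 1 0 + M 1 1 * β = ν * β := by simpa [mulVec, dotProduct] using congrFun hβ 1
  set nα := ((√(1 + ‖α‖ ^ 2) : ℝ) : ℂ)
  set nβ := ((√(1 + ‖β‖ ^ 2) : ℝ) : ℂ)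
  ext i j
  fin_cases i <;> fin_cases j <;>
    simp only [normalizedColumns, mul_apply, of_apply, cons_val', cons_val_zero, cons_val_one,
      cons_val_fin_one, Fin.sum_univ_two, Fin.isValue, Fin.zero_eta, Fin.mk_one, one_div,
      diagonal_apply_eq, diagonal_apply_ne, ne_eq, zero_ne_one, one_ne_zero, not_false_eq_true,
      mul_zero, add_zero, zero_add]
  · linear_combination nα⁻¹ * hα0
  · linear_combination nβ⁻¹ * hβ0
  · linear_combination nα⁻¹ * hα1
  · linear_combination nβ⁻¹ * hβ1

theorem su2_mulVec_eigenvector {a b c σ s x : ℝ} {ω α μ : ℂ} (hω : conj ω * ω = 1)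
    (hbs : b * s = a * σ) (hx : (x - s) ^ 2 = 1 + s ^ 2) (hα : α = I * ω * x)
    (hμ : μ = a * c + b * (x - s) * I) :
    !![a * (c - σ * I), b * conj ω; -b * ω, a * (c + σ * I)] *ᵥ ![1, α] = μ • ![1, α] := by
  have hbsC : (b : ℂ) * s = a * σ := by exact_mod_cast hbs
  have hxC : ((x : ℂ) - s) ^ 2 = 1 + s ^ 2 := by exact_mod_cast hx
  subst hα hμ
  ext i
  fin_cases i <;>
    simp only [mulVec, dotProduct, Fin.sum_univ_two, of_apply, cons_val', cons_val_zero,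
      cons_val_one, cons_val_fin_one, Fin.isValue, Fin.zero_eta, Fin.mk_one, Pi.smul_apply,
      smul_eq_mul, mul_one]
  · linear_combination I * b * x * hω + I * hbsC
  · linear_combination ω * x * hbsC + ω * b * hxC + (a * σ - b * (x - s)) * ω * x * I_sq

namespace Real

theorem cos_arccos_mul_cos {a : ℝ} (ha : a ^ 2 ≤ 1) (t : ℝ) :
    cos (arccos (a * cos t)) = a * cos t := by
  have h : |a * cos t| ≤ 1 := by
    rw [← sq_le_one_iff_abs_le_one, mul_pow]
    nlinarith [cos_sq_le_one t, sq_nonneg a]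
  exact cos_arccos (abs_le.mp h).1 (abs_le.mp h).2

theorem sin_arccos_mul_cos {a b : ℝ} (hb : 0 < b) (hab : a ^ 2 + b ^ 2 = 1) (t : ℝ) :
    sin (arccos (a * cos t)) = b * √(1 + (a / b * sin t) ^ 2) := by
  have h : 1 - (a * cos t) ^ 2 = (b * √(1 + (a / b * sin t) ^ 2)) ^ 2 := by
    rw [mul_pow b, sq_sqrt (by positivity)]
    field_simp
    linear_combination -hab - a ^ 2 * sin_sq_add_cos_sq t
  rw [sin_arccos, h, sqrt_sq (by positivity)]

end Real

theorem exp_I_mul_ofReal (y : ℝ) : exp (I * y) = Real.cos y + Real.sin y * I := by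
  rw [mul_comm, exp_ofReal_mul_I]

theorem exp_neg_I_mul_ofReal (y : ℝ) : exp (-I * y) = Real.cos y - Real.sin y * I := by
  rw [neg_mul, ← mul_neg, ← ofReal_neg, exp_I_mul_ofReal, Real.cos_neg, Real.sin_neg]
  push_cast; ring

theorem conj_exp_I_mul_ofReal_mul_self (y : ℝ) : conj (exp (I * y)) * exp (I * y) = 1 := by
  rw [conj_mul', norm_exp_I_mul_ofReal]; norm_num

theorem conj_I_mul_mul_I_mul {ω : ℂ} (hω : conj ω * ω = 1) (x y : ℝ) :
    conj (I * ω * x) * (I * ω * y) = (x * y : ℝ) := by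
  simp only [map_mul, conj_I, conj_ofReal]
  push_cast
  linear_combination (-I ^ 2 * x * y) * hω - x * y * I_sq

theorem SU_eq_normalizedColumns (l₁ l₂ : ℂ) (θ₁ θ₂ k : ℝ) :
    SU l₁ l₂ θ₁ θ₂ k = normalizedColumns (alphaP l₁ l₂ θ₁ θ₂ k) (alphaM l₁ l₂ θ₁ θ₂ k) :=
  rfl

theorem SU_mem_unitaryGroup (l₁ l₂ : ℂ) (θ₁ θ₂ k : ℝ) :
    SU l₁ l₂ θ₁ θ₂ k ∈ unitaryGroup (Fin 2) ℂ := by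
  rw [SU_eq_normalizedColumns]
  refine normalizedColumns_mem_unitaryGroup ?_
  have hω : conj (exp (I * (k + θ₁ - θ₂))) * exp (I * (k + θ₁ - θ₂)) = 1 := by
    exact_mod_cast conj_exp_I_mul_ofReal_mul_self (k + θ₁ - θ₂)
  rw [alphaP, alphaM, conj_I_mul_mul_I_mul hω]
  have hq := Real.sq_sqrt (by positivity : 0 ≤ 1 + (‖l₁‖ / ‖l₂‖ * Real.sin k) ^ 2)
  rw [← ofReal_one, ← ofReal_neg, ofReal_inj]
  linear_combination -hq

theorem Uk_eq {l₁ l₂ : ℂ} {a b θ₁ θ₂ : ℝ} (hl₁ : l₁ = a * exp (I * θ₁))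
    (hl₂ : l₂ = b * exp (I * θ₂)) (k : ℝ) :
    Uk l₁ l₂ (-conj l₂) (conj l₁) k =
      !![a * (Real.cos (k - θ₁) - Real.sin (k - θ₁) * I), b * conj (exp (I * (k - θ₂ : ℝ)));
        -b * exp (I * (k - θ₂ : ℝ)), a * (Real.cos (k - θ₁) + Real.sin (k - θ₁) * I)] := by
  rw [← exp_I_mul_ofReal, ← exp_neg_I_mul_ofReal]
  subst hl₁ hl₂
  ext i j
  fin_cases i <;> fin_cases j <;>
    simp only [Uk, of_apply, cons_val', cons_val_zero, cons_val_one, cons_val_fin_one,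
      Fin.isValue, Fin.zero_eta, Fin.mk_one, map_mul, conj_ofReal, ← exp_conj, conj_I, ofReal_sub,
      map_sub, neg_mul, mul_neg, neg_inj] <;>
    rw [mul_left_comm, ← exp_add] <;> ring_nf

section Eigenvectors

variable {l₁ l₂ : ℂ} {θ₁ θ₂ : ℝ}

theorem Uk_mulVec_alphaP (hl₂ : l₂ ≠ 0) (hnorm : ‖l₁‖ ^ 2 + ‖l₂‖ ^ 2 = 1)
    (hθ₁ : l₁ = (‖l₁‖ : ℂ) * exp (I * θ₁)) (hθ₂ : l₂ = (‖l₂‖ : ℂ) * exp (I * θ₂)) (k : ℝ) :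
    Uk l₁ l₂ (-conj l₂) (conj l₁) k *ᵥ ![1, alphaP l₁ l₂ θ₁ θ₂ (k - θ₁)] =
      exp (I * gam l₁ (k - θ₁)) • ![1, alphaP l₁ l₂ θ₁ θ₂ (k - θ₁)] := by
  have hb : 0 < ‖l₂‖ := norm_pos_iff.mpr hl₂
  have hq := Real.sq_sqrt (by positivity : 0 ≤ 1 + (‖l₁‖ / ‖l₂‖ * Real.sin (k - θ₁)) ^ 2)
  rw [Uk_eq hθ₁ hθ₂]
  refine su2_mulVec_eigenvector (s := ‖l₁‖ / ‖l₂‖ * Real.sin (k - θ₁))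
    (x := ‖l₁‖ / ‖l₂‖ * Real.sin (k - θ₁) + √(1 + (‖l₁‖ / ‖l₂‖ * Real.sin (k - θ₁)) ^ 2))
    (conj_exp_I_mul_ofReal_mul_self _) (by field_simp) (by linear_combination hq) ?_ ?_
  · rw [alphaP]; push_cast; ring_nf
  · rw [exp_I_mul_ofReal, gam, Real.cos_arccos_mul_cos (by nlinarith),
      Real.sin_arccos_mul_cos hb hnorm]
    push_cast; ring

theorem Uk_mulVec_alphaM (hl₂ : l₂ ≠ 0) (hnorm : ‖l₁‖ ^ 2 + ‖l₂‖ ^ 2 = 1)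
    (hθ₁ : l₁ = (‖l₁‖ : ℂ) * exp (I * θ₁)) (hθ₂ : l₂ = (‖l₂‖ : ℂ) * exp (I * θ₂)) (k : ℝ) :
    Uk l₁ l₂ (-conj l₂) (conj l₁) k *ᵥ ![1, alphaM l₁ l₂ θ₁ θ₂ (k - θ₁)] =
      exp (-I * gam l₁ (k - θ₁)) • ![1, alphaM l₁ l₂ θ₁ θ₂ (k - θ₁)] := by
  have hb : 0 < ‖l₂‖ := norm_pos_iff.mpr hl₂
  have hq := Real.sq_sqrt (by positivity : 0 ≤ 1 + (‖l₁‖ / ‖l₂‖ * Real.sin (k - θ₁)) ^ 2)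
  rw [Uk_eq hθ₁ hθ₂]
  refine su2_mulVec_eigenvector (s := ‖l₁‖ / ‖l₂‖ * Real.sin (k - θ₁))
    (x := ‖l₁‖ / ‖l₂‖ * Real.sin (k - θ₁) - √(1 + (‖l₁‖ / ‖l₂‖ * Real.sin (k - θ₁)) ^ 2))
    (conj_exp_I_mul_ofReal_mul_self _) (by field_simp) (by linear_combination hq) ?_ ?_
  · rw [alphaM]; push_cast; ring_nf
  · rw [exp_neg_I_mul_ofReal, gam, Real.cos_arccos_mul_cos (by nlinarith),
      Real.sin_arccos_mul_cos hb hnorm]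
    push_cast; ring

end Eigenvectors

theorem Smat_unitary_and_unitary_diagonalization
    (l₁ l₂ r₁ r₂ : ℂ)
    (hU : !![l₁, l₂; r₁, r₂] ∈ Matrix.unitaryGroup (Fin 2) ℂ)
    (hdet : (!![l₁, l₂; r₁, r₂] : Matrix (Fin 2) (Fin 2) ℂ).det = 1)
    (hl₂ : l₂ ≠ 0)
    (θ₁ θ₂ : ℝ) (hθ₁ : l₁ = (‖l₁‖ : ℂ) * Complex.exp (Complex.I * θ₁))
    (hθ₂ : l₂ = (‖l₂‖ : ℂ) * Complex.exp (Complex.I * θ₂))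
    (k : ℝ) :
    SU l₁ l₂ θ₁ θ₂ k ∈ Matrix.unitaryGroup (Fin 2) ℂ
    ∧ Uk l₁ l₂ r₁ r₂ k =
        SU l₁ l₂ θ₁ θ₂ (k - θ₁) *
          Matrix.diagonal ![Complex.exp (Complex.I * gam l₁ (k - θ₁)),
            Complex.exp (-Complex.I * gam l₁ (k - θ₁))] *
          (SU l₁ l₂ θ₁ θ₂ (k - θ₁))ᴴ := by
  obtain ⟨hnorm, rfl, rfl⟩ := of_mem_specialUnitaryGroup_fin_two ⟨hU, hdet⟩
  replace hnorm : ‖l₁‖ ^ 2 + ‖l₂‖ ^ 2 = 1 := by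
    simpa [mul_conj', ← ofReal_pow, ← ofReal_add] using hnorm
  refine ⟨SU_mem_unitaryGroup l₁ l₂ θ₁ θ₂ k, ?_⟩
  apply eq_mul_mul_conjTranspose_of_mul_eq_mul (SU_mem_unitaryGroup l₁ l₂ θ₁ θ₂ (k - θ₁))
  rw [SU_eq_normalizedColumns]
  exact mul_normalizedColumns (Uk_mulVec_alphaP hl₂ hnorm hθ₁ hθ₂ k)
    (Uk_mulVec_alphaM hl₂ hnorm hθ₁ hθ₂ k)
end
end

section
/- Let U = !![l₁,l₂;r₁,r₂] be a 2×2 complex unitary matrix with det U = 1 and l₂ ≠ 0, and define H(k) := S(k−θ₁) · diag(γ(k−θ₁), −γ(k−θ₁)) · S(k−θ₁)*. Define real functions h₁(κ) = −sin(κ+θ₁−θ₂)/√(1+((|l₁|/|l₂|) sin κ)²), h₂(κ) = cos(κ+θ₁−θ₂)/√(1+((|l₁|/|l₂|) sin κ)²), h₃(κ) = −((|l₁|/|l₂|) sin κ)/√(1+((|l₁|/|l₂|) sin κ)²). Then for every k ∈ ℝ: H(k) = γ(k−θ₁)·(h₁(k−θ₁)σ₁ + h₂(k−θ₁)σ₂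 + h₃(k−θ₁)σ₃), and h₁(κ)² + h₂(κ)² + h₃(κ)² = 1 for all κ. -/
open Matrix Complex Filter Topology

noncomputable section

/-- `h₁(κ) = −sin(κ+θ₁−θ₂)/√(1+((|l₁|/|l₂|) sin κ)²)`. -/
def h1 (l₁ l₂ : ℂ) (θ₁ θ₂ : ℝ) (κ : ℝ) : ℝ :=
  -Real.sin (κ + θ₁ - θ₂) / Real.sqrt (1 + (‖l₁‖ / ‖l₂‖ * Real.sin κ) ^ 2)

/-- `h₂(κ) = cos(κ+θ₁−θ₂)/√(1+((|l₁|/|l₂|) sin κ)²)`. -/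
def h2 (l₁ l₂ : ℂ) (θ₁ θ₂ : ℝ) (κ : ℝ) : ℝ :=
  Real.cos (κ + θ₁ - θ₂) / Real.sqrt (1 + (‖l₁‖ / ‖l₂‖ * Real.sin κ) ^ 2)

/-- `h₃(κ) = −((|l₁|/|l₂|) sin κ)/√(1+((|l₁|/|l₂|) sin κ)²)`. -/
def h3 (l₁ l₂ : ℂ) (κ : ℝ) : ℝ :=
  -(‖l₁‖ / ‖l₂‖ * Real.sin κ) /
    Real.sqrt (1 + (‖l₁‖ / ‖l₂‖ * Real.sin κ) ^ 2)

/-! `S(κ)` has the unit vectors along `(1, α±)` as columns, so `S diag(γ, -γ) S*` is `γ (P₊ - P₋)`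
with `P±` the orthogonal projections onto these lines. Write `α± = w (x ± s)` with the unit
`w = i e^{iφ}`, `x = (|l₁|/|l₂|) sin κ` and `s = √(1 + x²)`. Since `s² - x² = 1` we get
`1 + (x ± s)² = 2s(s ± x)`, and `P₊ - P₋` collapses to `s⁻¹ [[-x, w̄], [w, x]]`, the Pauli
combination with coefficients `(Re w, Im w, -x) / s = (h₁, h₂, h₃)`. -/

open ComplexConjugate

/-- The orthogonal projection onto the line `ℂ • (1, a)`. -/
def lineProj (a : ℂ) : Matrix (Fin 2) (Fin 2) ℂ :=
  ((1 + ‖a‖ ^ 2 : ℝ) : ℂ)⁻¹ • !![1, conj a; a, (‖a‖ ^ 2 : ℝ)]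

def unitColumns (a b : ℂ) : Matrix (Fin 2) (Fin 2) ℂ :=
  !![1 / ((√(1 + ‖a‖ ^ 2) : ℝ) : ℂ), 1 / ((√(1 + ‖b‖ ^ 2) : ℝ) : ℂ);
     a / ((√(1 + ‖a‖ ^ 2) : ℝ) : ℂ), b / ((√(1 + ‖b‖ ^ 2) : ℝ) : ℂ)]

lemma SU_eq_unitColumns (l₁ l₂ : ℂ) (θ₁ θ₂ k : ℝ) :
    SU l₁ l₂ θ₁ θ₂ k = unitColumns (alphaP l₁ l₂ θ₁ θ₂ k) (alphaM l₁ l₂ θ₁ θ₂ k) := rfl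

lemma unitColumns_mul_diagonal_mul_conjTranspose (a b g : ℂ) :
    unitColumns a b * diagonal ![g, -g] * (unitColumns a b)ᴴ = g • (lineProj a - lineProj b) := by
  have hsq (c : ℂ) : ((1 + ‖c‖ ^ 2 : ℝ) : ℂ) = ((√(1 + ‖c‖ ^ 2) : ℝ) : ℂ) ^ 2 := by
    rw [← ofReal_pow, Real.sq_sqrt (by positivity)]
  have hnorm (c : ℂ) : ((‖c‖ ^ 2 : ℝ) : ℂ) = c * conj c := by
    rw [mul_conj']; push_cast; rfl
  simp only [unitColumns, lineProj, hsq, hnorm]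
  ext i j
  fin_cases i <;> fin_cases j <;>
    simp [mul_apply, Fin.sum_univ_two, vecMul, dotProduct] <;> ring

lemma lineProj_unit_mul_ofReal {w : ℂ} (hw : ‖w‖ = 1) (t : ℝ) :
    lineProj (w * t) = ((1 + t ^ 2 : ℝ) : ℂ)⁻¹ • !![1, t * conj w; t * w, (t ^ 2 : ℝ)] := by
  have : ‖w * t‖ ^ 2 = t ^ 2 := by rw [norm_mul, hw, one_mul, norm_real, Real.norm_eq_abs, sq_abs]
  rw [lineProj, this, map_mul, conj_ofReal, mul_comm w, mul_comm _ (conj w)]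

lemma lineProj_sub_lineProj {w : ℂ} (hw : ‖w‖ = 1) {x s : ℝ} (hs : s ^ 2 = 1 + x ^ 2) :
    lineProj (w * ((x + s : ℝ) : ℂ)) - lineProj (w * ((x - s : ℝ) : ℂ))
      = (s : ℂ)⁻¹ • !![-(x : ℂ), conj w; w, (x : ℂ)] := by
  have hprod : (s + x) * (s - x) = 1 := by linear_combination hs
  have hp : (1 + (x + s) ^ 2 : ℝ) = 2 * s * (s + x) := by linear_combination -hs
  have hm : (1 + (x - s) ^ 2 : ℝ) = 2 * s * (s - x) := by linear_combination -hs
  rw [lineProj_unit_mul_ofReal hw, lineProj_unit_mul_ofReal hw, hp, hm]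
  have hprodC : ((s : ℂ) + x) * (s - x) = 1 := by exact_mod_cast hprod
  have hs0 : (s : ℂ) ≠ 0 := ofReal_ne_zero.mpr (by rintro rfl; nlinarith [sq_nonneg x])
  have hsp : (s : ℂ) + x ≠ 0 := left_ne_zero_of_mul_eq_one hprodC
  have hsm : (s : ℂ) - x ≠ 0 := right_ne_zero_of_mul_eq_one hprodC
  ext i j
  fin_cases i <;> fin_cases j <;>
    simp only [Matrix.sub_apply, Matrix.smul_apply, smul_of, smul_cons, smul_empty, of_apply,
      cons_val', cons_val_zero, cons_val_one, cons_val_fin_one, Fin.zero_eta, Fin.mk_one,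
      Fin.isValue, smul_eq_mul, mul_one, ofReal_mul, ofReal_add, ofReal_sub, ofReal_pow,
      ofReal_ofNat] <;>
    field_simp
  · linear_combination 2 * (x : ℂ) * hprodC
  all_goals ring

lemma inv_smul_hermitian_eq_pauli (w : ℂ) (x s : ℝ) :
    (s : ℂ)⁻¹ • !![-(x : ℂ), conj w; w, (x : ℂ)]
      = ((w.re / s : ℝ) : ℂ) • (!![0, 1; 1, 0] : Matrix (Fin 2) (Fin 2) ℂ)
        + ((w.im / s : ℝ) : ℂ) • (!![0, -I; I, 0] : Matrix (Fin 2) (Fin 2) ℂ)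
        + ((-x / s : ℝ) : ℂ) • (!![1, 0; 0, -1] : Matrix (Fin 2) (Fin 2) ℂ) := by
  ext i j
  fin_cases i <;> fin_cases j <;> simp [Complex.ext_iff, div_eq_inv_mul]

lemma I_mul_exp_I_mul_re_im (φ : ℝ) :
    (I * exp (I * φ)).re = -Real.sin φ ∧ (I * exp (I * φ)).im = Real.cos φ := by
  rw [mul_comm I (φ : ℂ), exp_mul_I]
  simp [← ofReal_cos, ← ofReal_sin]

lemma h1_sq_add_h2_sq_add_h3_sq (l₁ l₂ : ℂ) (θ₁ θ₂ κ : ℝ) :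
    h1 l₁ l₂ θ₁ θ₂ κ ^ 2 + h2 l₁ l₂ θ₁ θ₂ κ ^ 2 + h3 l₁ l₂ κ ^ 2 = 1 := by
  have hs := Real.sq_sqrt (by positivity : (0 : ℝ) ≤ 1 + (‖l₁‖ / ‖l₂‖ * Real.sin κ) ^ 2)
  have hs0 : 1 + (‖l₁‖ / ‖l₂‖ * Real.sin κ) ^ 2 ≠ 0 := by positivity
  simp only [h1, h2, h3, div_pow, neg_sq, hs]
  field_simp
  linear_combination Real.sin_sq_add_cos_sq (κ + θ₁ - θ₂)

theorem Hk_pauli_decomposition_general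
    (l₁ l₂ : ℂ)
    (θ₁ θ₂ : ℝ) :
    (∀ k : ℝ, Hk l₁ l₂ θ₁ θ₂ k =
      ((gam l₁ (k - θ₁) : ℝ) : ℂ) •
        (((h1 l₁ l₂ θ₁ θ₂ (k - θ₁) : ℝ) : ℂ) • (!![0, 1; 1, 0] : Matrix (Fin 2) (Fin 2) ℂ)
          + ((h2 l₁ l₂ θ₁ θ₂ (k - θ₁) : ℝ) : ℂ) • (!![0, -Complex.I; Complex.I, 0] : Matrix (Fin 2) (Fin 2) ℂ)
          + ((h3 l₁ l₂ (k - θ₁) : ℝ) : ℂ) • (!![1, 0; 0, -1] : Matrix (Fin 2) (Fin 2) ℂ)))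
    ∧ ∀ κ : ℝ, h1 l₁ l₂ θ₁ θ₂ κ ^ 2 + h2 l₁ l₂ θ₁ θ₂ κ ^ 2 + h3 l₁ l₂ κ ^ 2 = 1 := by
  refine ⟨fun k => ?_, h1_sq_add_h2_sq_add_h3_sq l₁ l₂ θ₁ θ₂⟩
  set κ := k - θ₁
  set x := ‖l₁‖ / ‖l₂‖ * Real.sin κ
  set φ := κ + θ₁ - θ₂
  set w := I * exp (I * φ)
  have hw : ‖w‖ = 1 := by rw [norm_mul, norm_I, norm_exp_I_mul_ofReal, one_mul]
  have hs : √(1 + x ^ 2) ^ 2 = 1 + x ^ 2 := Real.sq_sqrt (by positivity)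
  have hα : alphaP l₁ l₂ θ₁ θ₂ κ = w * ((x + √(1 + x ^ 2) : ℝ) : ℂ) ∧
      alphaM l₁ l₂ θ₁ θ₂ κ = w * ((x - √(1 + x ^ 2) : ℝ) : ℂ) := by
    constructor <;> simp only [alphaP, alphaM, w, φ, ofReal_sub, ofReal_add] <;> rfl
  obtain ⟨hre, him⟩ := I_mul_exp_I_mul_re_im φ
  rw [Hk, SU_eq_unitColumns, unitColumns_mul_diagonal_mul_conjTranspose, hα.1, hα.2,
    lineProj_sub_lineProj hw hs, inv_smul_hermitian_eq_pauli, hre, him]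
  rfl

theorem Hk_pauli_decomposition
    (l₁ l₂ r₁ r₂ : ℂ)
    (hU : !![l₁, l₂; r₁, r₂] ∈ Matrix.unitaryGroup (Fin 2) ℂ)
    (hdet : (!![l₁, l₂; r₁, r₂] : Matrix (Fin 2) (Fin 2) ℂ).det = 1)
    (hl₂ : l₂ ≠ 0)
    (θ₁ θ₂ : ℝ) (hθ₁ : l₁ = (‖l₁‖ : ℂ) * Complex.exp (Complex.I * θ₁))
    (hθ₂ : l₂ = (‖l₂‖ : ℂ) * Complex.exp (Complex.I * θ₂)) :
    (∀ k : ℝ, Hk l₁ l₂ θ₁ θ₂ k =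
      ((gam l₁ (k - θ₁) : ℝ) : ℂ) •
        (((h1 l₁ l₂ θ₁ θ₂ (k - θ₁) : ℝ) : ℂ) • (!![0, 1; 1, 0] : Matrix (Fin 2) (Fin 2) ℂ)
          + ((h2 l₁ l₂ θ₁ θ₂ (k - θ₁) : ℝ) : ℂ) • (!![0, -Complex.I; Complex.I, 0] : Matrix (Fin 2) (Fin 2) ℂ)
          + ((h3 l₁ l₂ (k - θ₁) : ℝ) : ℂ) • (!![1, 0; 0, -1] : Matrix (Fin 2) (Fin 2) ℂ)))
    ∧ ∀ κ : ℝ, h1 l₁ l₂ θ₁ θ₂ κ ^ 2 + h2 l₁ l₂ θ₁ θ₂ κ ^ 2 + h3 l₁ l₂ κ ^ 2 = 1 :=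
  Hk_pauli_decomposition_general l₁ l₂ θ₁ θ₂
end
end
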